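/- arXiv:2507.04109 — 2 statements merged into one kernel-verified Lean document; each statement's English description precedes it below -/
import Mathlib

section
/- For any two vertices u, v in a weighted connected undirected hypergraph and any hyperedge h, both α ↦ κ_α(u,v) and α ↦ κ_α(h) are concave functions on [0,1]; that is, for 0 ≤ α < β < γ ≤ 1 with λ = (γ-β)/(γ-α), one has κ_β ≥ λ κ_α + (1-λ) κ_γ. -/
open Finset Filter Topology

variable {V : Type*} [Fintype V] [DecidableEq V]

/-- A finite weighted undirected hypergraph with positive hyperedge weights. -/
structure UHyp (V : Type*) [Fintype V] [DecidableEq V] where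
  E : Finset (Finset V)
  w : Finset V → ℝ
  pos : ∀ h ∈ E, 0 < w h

/-- `γ` is a hyperpath connecting `u` and `v`. -/
def IsHyperpath (G : UHyp V) (γ : List (Finset V)) (u v : V) : Prop :=
  γ ≠ [] ∧ (∀ h ∈ γ, h ∈ G.E) ∧
  (∀ h0, γ.head? = some h0 → u ∈ h0) ∧
  (∀ hl, γ.getLast? = some hl → v ∈ hl) ∧
  List.Chain' (fun a b => (a ∩ b).Nonempty) γ

/-- Weighted hyperpath distance. -/
noncomputable def hdist (G : UHyp V) (u v : V) : ℝ :=
  if u = v then 0 else sInf {s | ∃ γ, IsHyperpath G γ u v ∧ s = (γ.map G.w).sum}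

/-- Connectedness: any two distinct vertices are joined by a hyperpath. -/
def UConnected (G : UHyp V) : Prop :=
  ∀ u v : V, u ≠ v → ∃ γ, IsHyperpath G γ u v

/-- Weighted degree of a vertex. -/
noncomputable def Deg (G : UHyp V) (x : V) : ℝ :=
  ∑ h ∈ G.E.filter (fun h => x ∈ h), G.w h

open Classical in
/-- The lazy random-walk probability measure `μ_x^α`. -/
noncomputable def mu (G : UHyp V) (α : ℝ) (x : V) (z : V) : ℝ :=
  if z = x then α
  else if (∃ h ∈ G.E, x ∈ h ∧ z ∈ h) then
    (1 - α) * ∑ h ∈ G.E.filter (fun h => x ∈ h ∧ z ∈ h),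
      (1 / ((h.card : ℝ) - 1)) * G.w h / Deg G x
  else 0

/-- `π` is a coupling of `μ` and `ν`. -/
def IsCoupling (μ ν : V → ℝ) (π : V → V → ℝ) : Prop :=
  (∀ u v, 0 ≤ π u v) ∧ (∀ u, ∑ v, π u v = μ u) ∧ (∀ v, ∑ u, π u v = ν v)

/-- The 1-Wasserstein functional associated to a cost `d`. -/
noncomputable def Wd (d : V → V → ℝ) (μ ν : V → ℝ) : ℝ :=
  sInf {s | ∃ π, IsCoupling μ ν π ∧ s = ∑ u, ∑ v, π u v * d u v}

/-- The 1-Wasserstein distance on a hypergraph. -/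
noncomputable def W1 (G : UHyp V) (μ ν : V → ℝ) : ℝ :=
  Wd (hdist G) μ ν

/-- Ollivier–Ricci curvature `κ_α(u,v)` between two vertices. -/
noncomputable def kappaV (G : UHyp V) (α : ℝ) (u v : V) : ℝ :=
  1 - W1 G (mu G α u) (mu G α v) / hdist G u v

/-- Length `L(h)` of a hyperedge: minimal pairwise distance within `h`. -/
noncomputable def Lh (G : UHyp V) (h : Finset V) : ℝ :=
  sInf {s | ∃ x ∈ h, ∃ y ∈ h, x ≠ y ∧ s = hdist G x y}

/-- `W_α(h)`: the sum of pairwise Wasserstein distances over vertices of `h`. -/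
noncomputable def Wedge {V : Type*} [Fintype V] [DecidableEq V] [LinearOrder V] (G : UHyp V) (α : ℝ)
    (h : Finset V) : ℝ :=
  ∑ p ∈ (h ×ˢ h).filter (fun p => p.1 < p.2), W1 G (mu G α p.1) (mu G α p.2)

/-- Ollivier–Ricci curvature `κ_α(h)` of a hyperedge. -/
noncomputable def kappaE {V : Type*} [Fintype V] [DecidableEq V] [LinearOrder V] (G : UHyp V) (α : ℝ)
    (h : Finset V) : ℝ :=
  1 - Wedge G α h / Lh G h

/-- Maximal hyperedge weight `max_{h∈H} w_h`. -/
noncomputable def maxW (G : UHyp V) : ℝ :=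
  sSup {x | ∃ h ∈ G.E, x = G.w h}


section Aux

open Classical in
/-- The `α`-independent neighbor weight. -/
noncomputable def cfun (G : UHyp V) (x z : V) : ℝ :=
  if (∃ h ∈ G.E, x ∈ h ∧ z ∈ h) then
    ∑ h ∈ G.E.filter (fun h => x ∈ h ∧ z ∈ h),
      (1 / ((h.card : ℝ) - 1)) * G.w h / Deg G x
  else 0

lemma mu_eq (G : UHyp V) (α : ℝ) (x z : V) :
    mu G α x z = if z = x then α else (1 - α) * cfun G x z := by
  classical
  unfold mu cfun
  split_ifs <;> simp

lemma Deg_nonneg (G : UHyp V) (x : V) : 0 ≤ Deg G x :=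
  Finset.sum_nonneg fun h hh => (G.pos h (Finset.mem_filter.1 hh).1).le

lemma cfun_nonneg (G : UHyp V) (x z : V) : 0 ≤ cfun G x z := by
  classical
  unfold cfun
  split_ifs with h
  · refine Finset.sum_nonneg fun e he => ?_
    have hE := Finset.mem_filter.1 he
    have hx : x ∈ e := hE.2.1
    have hc : (1 : ℝ) ≤ e.card := by
      exact_mod_cast Finset.card_pos.2 ⟨x, hx⟩
    have h1 : (0:ℝ) ≤ 1 / ((e.card : ℝ) - 1) := by
      apply one_div_nonneg.2; linarith
    exact div_nonneg (mul_nonneg h1 (G.pos e hE.1).le) (Deg_nonneg G x)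
  · exact le_refl 0

lemma mu_nonneg (G : UHyp V) {α : ℝ} (hα : α ∈ Set.Icc (0:ℝ) 1) (x z : V) :
    0 ≤ mu G α x z := by
  rw [mu_eq]
  split_ifs
  · exact hα.1
  · exact mul_nonneg (by linarith [hα.2]) (cfun_nonneg G x z)

lemma mu_mass (G : UHyp V) (α : ℝ) (x : V) :
    ∑ z, mu G α x z = α + (1 - α) * ∑ z ∈ Finset.univ.erase x, cfun G x z := by
  classical
  rw [← Finset.add_sum_erase _ _ (Finset.mem_univ x), mu_eq, if_pos rfl,
    Finset.mul_sum]
  congr 1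
  refine Finset.sum_congr rfl fun z hz => ?_
  rw [mu_eq, if_neg (Finset.ne_of_mem_erase hz)]

lemma hdist_nonneg (G : UHyp V) (u v : V) : 0 ≤ hdist G u v := by
  unfold hdist
  split_ifs
  · exact le_refl 0
  · refine Real.sInf_nonneg fun s hs => ?_
    obtain ⟨γ, hγ, rfl⟩ := hs
    refine List.sum_nonneg fun a ha => ?_
    obtain ⟨e, he, rfl⟩ := List.mem_map.1 ha
    exact (G.pos e (hγ.2.1 e he)).le

lemma Lh_nonneg (G : UHyp V) (h : Finset V) : 0 ≤ Lh G h := by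
  refine Real.sInf_nonneg fun s hs => ?_
  obtain ⟨x, _, y, _, _, rfl⟩ := hs
  exact hdist_nonneg G x y

lemma coupling_mass {μ ν : V → ℝ} {π : V → V → ℝ} (hπ : IsCoupling μ ν π) :
    ∑ z, μ z = ∑ z, ν z := by
  calc ∑ z, μ z = ∑ p, ∑ q, π p q := by
        exact (Finset.sum_congr rfl fun p _ => (hπ.2.1 p).symm)
    _ = ∑ q, ∑ p, π p q := Finset.sum_comm
    _ = ∑ z, ν z := Finset.sum_congr rfl fun q _ => hπ.2.2 q

lemma coupling_exists {μ ν : V → ℝ} (hμ : ∀ z, 0 ≤ μ z) (hν : ∀ z, 0 ≤ ν z)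
    (hm : ∑ z, μ z = ∑ z, ν z) : ∃ π, IsCoupling μ ν π := by
  by_cases hM : ∑ z, μ z = 0
  · have hμ0 : ∀ z, μ z = 0 := by
      intro z
      exact (Finset.sum_eq_zero_iff_of_nonneg fun i _ => hμ i).1 hM z (Finset.mem_univ z)
    have hν0 : ∀ z, ν z = 0 := by
      intro z
      exact (Finset.sum_eq_zero_iff_of_nonneg fun i _ => hν i).1 (hm ▸ hM) z (Finset.mem_univ z)
    exact ⟨fun _ _ => 0, fun _ _ => le_refl 0,
      fun p => by simp [hμ0 p], fun q => by simp [hν0 q]⟩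
  · refine ⟨fun p q => μ p * ν q / (∑ z, μ z), fun p q =>
      div_nonneg (mul_nonneg (hμ p) (hν q)) (Finset.sum_nonneg fun i _ => hμ i), ?_, ?_⟩
    · intro p
      rw [← Finset.sum_div, ← Finset.mul_sum, ← hm, mul_div_assoc,
        div_self hM, mul_one]
    · intro q
      have : ∀ p, μ p * ν q / (∑ z, μ z) = ν q / (∑ z, μ z) * μ p := fun p => by ring
      simp only [this]
      rw [← Finset.mul_sum, div_mul_cancel₀ _ hM]

lemma Wd_nonneg {d : V → V → ℝ} (hd : ∀ u v, 0 ≤ d u v) (μ ν : V → ℝ) :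
    0 ≤ Wd d μ ν := by
  refine Real.sInf_nonneg fun s hs => ?_
  obtain ⟨π, hπ, rfl⟩ := hs
  exact Finset.sum_nonneg fun p _ => Finset.sum_nonneg fun q _ =>
    mul_nonneg (hπ.1 p q) (hd p q)

lemma Wd_bddBelow {d : V → V → ℝ} (hd : ∀ u v, 0 ≤ d u v) (μ ν : V → ℝ) :
    BddBelow {s | ∃ π, IsCoupling μ ν π ∧ s = ∑ u, ∑ v, π u v * d u v} := by
  refine ⟨0, fun s hs => ?_⟩
  obtain ⟨π, hπ, rfl⟩ := hs
  exact Finset.sum_nonneg fun p _ => Finset.sum_nonneg fun q _ =>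
    mul_nonneg (hπ.1 p q) (hd p q)

lemma W1_convex_ineq (G : UHyp V) (u v : V) {x y a b : ℝ}
    (hx : x ∈ Set.Icc (0:ℝ) 1) (hy : y ∈ Set.Icc (0:ℝ) 1)
    (ha : 0 ≤ a) (hb : 0 ≤ b) (hab : a + b = 1) :
    W1 G (mu G (a * x + b * y) u) (mu G (a * x + b * y) v)
      ≤ a * W1 G (mu G x u) (mu G x v) + b * W1 G (mu G y u) (mu G y v) := by
  have hd : ∀ p q, 0 ≤ hdist G p q := hdist_nonneg G
  rcases eq_or_lt_of_le ha with rfl | hapos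
  · have hb1 : b = 1 := by linarith
    subst hb1; simp
  rcases eq_or_lt_of_le hb with rfl | hbpos
  · have ha1 : a = 1 := by linarith
    subst ha1; simp
  set z := a * x + b * y with hz
  have hzI : z ∈ Set.Icc (0:ℝ) 1 := by
    constructor
    · nlinarith [hx.1, hy.1]
    · nlinarith [hx.2, hy.2]
  set Sz := {s | ∃ π, IsCoupling (mu G z u) (mu G z v) π ∧
      s = ∑ p, ∑ q, π p q * hdist G p q} with hSzdef
  have hWz : W1 G (mu G z u) (mu G z v) = sInf Sz := rfl
  by_cases hne : Sz.Nonempty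
  swap
  · rw [hWz, Set.not_nonempty_iff_eq_empty.1 hne, Real.sInf_empty]
    have h1 := Wd_nonneg hd (mu G x u) (mu G x v)
    have h2 := Wd_nonneg hd (mu G y u) (mu G y v)
    have h1' : 0 ≤ W1 G (mu G x u) (mu G x v) := h1
    have h2' : 0 ≤ W1 G (mu G y u) (mu G y v) := h2
    nlinarith [mul_nonneg hapos.le h1', mul_nonneg hbpos.le h2']
  obtain ⟨s0, π0, hπ0, _⟩ := hne
  have hmz : ∑ w, mu G z u w = ∑ w, mu G z v w := coupling_mass hπ0
  rw [mu_mass, mu_mass] at hmz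
  have hkey : (1 - z) * ((∑ w ∈ Finset.univ.erase u, cfun G u w)
      - ∑ w ∈ Finset.univ.erase v, cfun G v w) = 0 := by nlinarith [hmz]
  have hmx : ∑ w, mu G x u w = ∑ w, mu G x v w ∧
      ∑ w, mu G y u w = ∑ w, mu G y v w := by
    rcases mul_eq_zero.1 hkey with h1 | h2
    · -- z = 1 forces x = 1 and y = 1
      have hax : a * (1 - x) + b * (1 - y) = 0 := by
        have : z = 1 := by linarith
        rw [hz] at this; nlinarith [this, hab]
      have t1 : 0 ≤ a * (1 - x) := mul_nonneg hapos.le (by linarith [hx.2])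
      have t2 : 0 ≤ b * (1 - y) := mul_nonneg hbpos.le (by linarith [hy.2])
      have hx1 : x = 1 := by
        have : a * (1 - x) = 0 := by linarith
        rcases mul_eq_zero.1 this with h | h
        · exact absurd h (ne_of_gt hapos)
        · linarith
      have hy1 : y = 1 := by
        have : b * (1 - y) = 0 := by linarith
        rcases mul_eq_zero.1 this with h | h
        · exact absurd h (ne_of_gt hbpos)
        · linarith
      rw [mu_mass, mu_mass, mu_mass, mu_mass, hx1, hy1]
      norm_num
    · have hS : (∑ w ∈ Finset.univ.erase u, cfun G u w)
          = ∑ w ∈ Finset.univ.erase v, cfun G v w := by linarith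
      rw [mu_mass, mu_mass, mu_mass, mu_mass, hS]
      exact ⟨rfl, rfl⟩
  obtain ⟨π1, hπ1⟩ := coupling_exists (mu_nonneg G hx u) (mu_nonneg G hx v) hmx.1
  obtain ⟨π2, hπ2⟩ := coupling_exists (mu_nonneg G hy u) (mu_nonneg G hy v) hmx.2
  refine le_of_forall_pos_le_add fun ε hε => ?_
  set Sx := {s | ∃ π, IsCoupling (mu G x u) (mu G x v) π ∧
      s = ∑ p, ∑ q, π p q * hdist G p q} with hSxdef
  set Sy := {s | ∃ π, IsCoupling (mu G y u) (mu G y v) π ∧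
      s = ∑ p, ∑ q, π p q * hdist G p q} with hSydef
  have hWx : W1 G (mu G x u) (mu G x v) = sInf Sx := rfl
  have hWy : W1 G (mu G y u) (mu G y v) = sInf Sy := rfl
  have hSxne : Sx.Nonempty := ⟨_, π1, hπ1, rfl⟩
  have hSyne : Sy.Nonempty := ⟨_, π2, hπ2, rfl⟩
  obtain ⟨s1, hs1, hs1lt⟩ := Real.lt_sInf_add_pos hSxne hε
  obtain ⟨s2, hs2, hs2lt⟩ := Real.lt_sInf_add_pos hSyne hε
  obtain ⟨ρ1, hρ1, rfl⟩ := hs1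
  obtain ⟨ρ2, hρ2, rfl⟩ := hs2
  have hmuz : ∀ w0 q, mu G z w0 q = a * mu G x w0 q + b * mu G y w0 q := by
    intro w0 q
    rw [mu_eq, mu_eq, mu_eq]
    split_ifs
    · exact hz
    · have h1z : (1 - z) = a * (1 - x) + b * (1 - y) := by
        rw [hz]; nlinarith [hab]
      rw [h1z]; ring
  have hcomb : IsCoupling (mu G z u) (mu G z v) (fun p q => a * ρ1 p q + b * ρ2 p q) := by
    refine ⟨fun p q => add_nonneg (mul_nonneg hapos.le (hρ1.1 p q))
      (mul_nonneg hbpos.le (hρ2.1 p q)), fun p => ?_, fun q => ?_⟩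
    · rw [Finset.sum_add_distrib, ← Finset.mul_sum, ← Finset.mul_sum,
        hρ1.2.1 p, hρ2.2.1 p, hmuz u p]
    · rw [Finset.sum_add_distrib, ← Finset.mul_sum, ← Finset.mul_sum,
        hρ1.2.2 q, hρ2.2.2 q, hmuz v q]
  have hmem : a * (∑ p, ∑ q, ρ1 p q * hdist G p q)
      + b * (∑ p, ∑ q, ρ2 p q * hdist G p q) ∈ Sz := by
    refine ⟨fun p q => a * ρ1 p q + b * ρ2 p q, hcomb, ?_⟩
    rw [Finset.mul_sum, Finset.mul_sum, ← Finset.sum_add_distrib]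
    refine Finset.sum_congr rfl fun p _ => ?_
    rw [Finset.mul_sum, Finset.mul_sum, ← Finset.sum_add_distrib]
    refine Finset.sum_congr rfl fun q _ => ?_
    ring
  have hbdd : BddBelow Sz := Wd_bddBelow hd _ _
  have hle : sInf Sz ≤ a * (∑ p, ∑ q, ρ1 p q * hdist G p q)
      + b * (∑ p, ∑ q, ρ2 p q * hdist G p q) := csInf_le hbdd hmem
  have e1 : a * (∑ p, ∑ q, ρ1 p q * hdist G p q) ≤ a * (sInf Sx + ε) :=
    mul_le_mul_of_nonneg_left (le_of_lt hs1lt) hapos.le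
  have e2 : b * (∑ p, ∑ q, ρ2 p q * hdist G p q) ≤ b * (sInf Sy + ε) :=
    mul_le_mul_of_nonneg_left (le_of_lt hs2lt) hbpos.le
  rw [hWz, hWx, hWy]
  nlinarith [hle, e1, e2]

lemma W1_convexOn (G : UHyp V) (u v : V) :
    ConvexOn ℝ (Set.Icc (0:ℝ) 1) (fun α => W1 G (mu G α u) (mu G α v)) := by
  refine ⟨convex_Icc 0 1, fun x hx y hy a b ha hb hab => ?_⟩
  simpa [smul_eq_mul] using W1_convex_ineq G u v hx hy ha hb hab

lemma concave_one_sub_div {f : ℝ → ℝ} {d : ℝ} (hd : 0 ≤ d)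
    (hf : ConvexOn ℝ (Set.Icc (0:ℝ) 1) f) :
    ConcaveOn ℝ (Set.Icc (0:ℝ) 1) (fun α => 1 - f α / d) := by
  refine ⟨convex_Icc 0 1, fun x hx y hy a b ha hb hab => ?_⟩
  have h1 : f (a • x + b • y) ≤ a * f x + b * f y := hf.2 hx hy ha hb hab
  have h2 : f (a • x + b • y) * d⁻¹ ≤ (a * f x + b * f y) * d⁻¹ :=
    mul_le_mul_of_nonneg_right h1 (inv_nonneg.2 hd)
  simp only [smul_eq_mul] at *
  rw [div_eq_mul_inv, div_eq_mul_inv, div_eq_mul_inv]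
  nlinarith [h2, hab]

end Aux


/-- `α ↦ κ_α(u,v)` and `α ↦ κ_α(h)` are concave on `[0,1]`. -/
theorem stmt1 {V : Type*} [Fintype V] [DecidableEq V] [LinearOrder V] (G : UHyp V)
    (hconn : UConnected G) (u v : V) (huv : u ≠ v)
    (h : Finset V) (hh : h ∈ G.E) (hcard : 2 ≤ h.card) :
    ConcaveOn ℝ (Set.Icc (0:ℝ) 1) (fun α => kappaV G α u v) ∧
    ConcaveOn ℝ (Set.Icc (0:ℝ) 1) (fun α => kappaE G α h) := by
  constructor
  · have := concave_one_sub_div (hdist_nonneg G u v) (W1_convexOn G u v)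
    simpa [kappaV] using this
  · have hsum : ConvexOn ℝ (Set.Icc (0:ℝ) 1)
        (fun α => ∑ p ∈ (h ×ˢ h).filter (fun p => p.1 < p.2),
          W1 G (mu G α p.1) (mu G α p.2)) := by
      classical
      induction ((h ×ˢ h).filter (fun p => p.1 < p.2)) using Finset.cons_induction with
      | empty => simpa using convexOn_const (0:ℝ) (convex_Icc 0 1)
      | cons p s hp ih =>
        simp only [Finset.sum_cons]
        exact (W1_convexOn G p.1 p.2).add ih
    have := concave_one_sub_div (Lh_nonneg G h) hsum
    simpa [kappaE, Wedge] using this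
end

section
/- (Curvature upper bound on oriented hypergraphs) Let H_o be a weighted oriented hypergraph (so d is symmetric). For any α ∈ [0,1] and hyperedge h = (A_h, B_h), κ_α(h) ≤ (1-α) · 2 max_{h'∈H} w_{h'} / L(h). -/
open Finset Filter Topology

variable {V : Type*} [Fintype V] [DecidableEq V]

/-- A finite weighted directed hypergraph: each hyperedge is an ordered pair
`(A_h, B_h)` of nonempty vertex sets, with a positive weight. -/
structure DHyp (V : Type*) [Fintype V] [DecidableEq V] where
  E : Finset (Finset V × Finset V)
  w : Finset V × Finset V → ℝ
  pos : ∀ h ∈ E, 0 < w h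
  nonempA : ∀ h ∈ E, h.1.Nonempty
  nonempB : ∀ h ∈ E, h.2.Nonempty

/-- `γ` is a directed path from `u` to `v`. -/
def IsDipath (G : DHyp V) (γ : List (Finset V × Finset V)) (u v : V) : Prop :=
  γ ≠ [] ∧ (∀ h ∈ γ, h ∈ G.E) ∧
  (∀ h0, γ.head? = some h0 → u ∈ h0.1) ∧
  (∀ hl, γ.getLast? = some hl → v ∈ hl.2) ∧
  List.Chain' (fun a b => (a.2 ∩ b.1).Nonempty) γ

/-- Weighted quasi-distance. -/
noncomputable def ddist (G : DHyp V) (u v : V) : ℝ :=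
  if u = v then 0 else sInf {s | ∃ γ, IsDipath G γ u v ∧ s = (γ.map G.w).sum}

/-- Strong connectivity: every ordered pair of distinct vertices is joined
by a directed path. -/
def StronglyConnected (G : DHyp V) : Prop :=
  ∀ u v : V, u ≠ v → ∃ γ, IsDipath G γ u v

/-- Looplessness: inputs and outputs of each hyperedge are disjoint. -/
def Loopless (G : DHyp V) : Prop := ∀ h ∈ G.E, h.1 ∩ h.2 = ∅

open Classical in
/-- In-neighborhood `Γ^{in}(x)`. -/
noncomputable def GammaIn (G : DHyp V) (x : V) : Finset V :=
  Finset.univ.filter (fun z => ∃ h ∈ G.E, x ∈ h.2 ∧ z ∈ h.1)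

open Classical in
/-- Out-neighborhood `Γ^{out}(x)`. -/
noncomputable def GammaOut (G : DHyp V) (x : V) : Finset V :=
  Finset.univ.filter (fun z => ∃ h ∈ G.E, x ∈ h.1 ∧ z ∈ h.2)

/-- In-degree: number of hyperedges having `x` as an output. -/
def degIn (G : DHyp V) (x : V) : ℕ := (G.E.filter (fun h => x ∈ h.2)).card

/-- Out-degree: number of hyperedges having `x` as an input. -/
def degOut (G : DHyp V) (x : V) : ℕ := (G.E.filter (fun h => x ∈ h.1)).card

/-- In-measure `μ^α_{x}` of a vertex `x ∈ A_h`, where `n = |A_h|`. -/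
noncomputable def muIn (G : DHyp V) (α : ℝ) (n : ℕ) (x z : V) : ℝ :=
  if z = x then α / n
  else if z ∈ GammaIn G x then
    (1 - α) * ∑ h ∈ G.E.filter (fun h => x ∈ h.2 ∧ z ∈ h.1),
      (1 / ((n : ℝ) * h.1.card)) *
        (G.w h / ∑ h' ∈ G.E.filter (fun h'' => x ∈ h''.2), G.w h')
  else 0

/-- Out-measure `μ^α_{y}` of a vertex `y ∈ B_h`, where `m = |B_h|`. -/
noncomputable def muOut (G : DHyp V) (α : ℝ) (m : ℕ) (y z : V) : ℝ :=
  if z = y then α / m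
  else if z ∈ GammaOut G y then
    (1 - α) * ∑ h ∈ G.E.filter (fun h => y ∈ h.1 ∧ z ∈ h.2),
      (1 / ((m : ℝ) * h.2.card)) *
        (G.w h / ∑ h' ∈ G.E.filter (fun h'' => y ∈ h''.1), G.w h')
  else 0

/-- The measure `μ^α_{A_h}`. -/
noncomputable def muA (G : DHyp V) (α : ℝ) (h : Finset V × Finset V) : V → ℝ :=
  fun z => ∑ x ∈ h.1, muIn G α h.1.card x z

/-- The measure `μ^α_{B_h}`. -/
noncomputable def muB (G : DHyp V) (α : ℝ) (h : Finset V × Finset V) : V → ℝ :=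
  fun z => ∑ y ∈ h.2, muOut G α h.2.card y z

/-- Length of a directed hyperedge: `L(h) = min_{x∈A_h, y∈B_h} d(x,y)`. -/
noncomputable def Ldi (G : DHyp V) (h : Finset V × Finset V) : ℝ :=
  sInf {s | ∃ x ∈ h.1, ∃ y ∈ h.2, s = ddist G x y}

/-- Ollivier–Ricci curvature `κ_α(h)` of a directed hyperedge. -/
noncomputable def kappaDE (G : DHyp V) (α : ℝ) (h : Finset V × Finset V) : ℝ :=
  1 - Wd (ddist G) (muA G α h) (muB G α h) / Ldi G h

/-- Single-vertex in-measure `μ^α_{u^{in}}`. -/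
noncomputable def muInPt (G : DHyp V) (α : ℝ) (u z : V) : ℝ :=
  if z = u then α
  else if z ∈ GammaIn G u then
    (1 - α) * ∑ h ∈ G.E.filter (fun h => u ∈ h.2 ∧ z ∈ h.1),
      (1 / (h.1.card : ℝ)) * (G.w h / ∑ h' ∈ G.E.filter (fun h'' => u ∈ h''.2), G.w h')
  else 0

/-- Single-vertex out-measure `μ^α_{v^{out}}`. -/
noncomputable def muOutPt (G : DHyp V) (α : ℝ) (v z : V) : ℝ :=
  if z = v then α
  else if z ∈ GammaOut G v then
    (1 - α) * ∑ h ∈ G.E.filter (fun h => v ∈ h.1 ∧ z ∈ h.2),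
      (1 / (h.2.card : ℝ)) * (G.w h / ∑ h' ∈ G.E.filter (fun h'' => v ∈ h''.1), G.w h')
  else 0

/-- Ollivier–Ricci curvature `κ_α(u,v)` between two vertices. -/
noncomputable def kappaDV (G : DHyp V) (α : ℝ) (u v : V) : ℝ :=
  1 - Wd (ddist G) (muInPt G α u) (muOutPt G α v) / ddist G u v

/-- Maximal hyperedge weight. -/
noncomputable def maxWd (G : DHyp V) : ℝ := sSup {x | ∃ h ∈ G.E, x = G.w h}

/-- Diameter of a directed hypergraph. -/
noncomputable def diamD (G : DHyp V) : ℝ := sSup {s | ∃ u v : V, s = ddist G u v}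

/-- An oriented hypergraph: inputs and outputs are disjoint, the reversal of each
hyperedge is a hyperedge, and weights are reversal-symmetric. -/
def Oriented (G : DHyp V) : Prop :=
  ∀ h ∈ G.E, h.1 ∩ h.2 = ∅ ∧ (h.2, h.1) ∈ G.E ∧ G.w (h.2, h.1) = G.w h

/-- `B_H = max_h |B_h|`. -/
def BH (G : DHyp V) : ℕ := G.E.sup (fun h => h.2.card)

/-- `A_H = max_h |A_h|`. -/
def AH (G : DHyp V) : ℕ := G.E.sup (fun h => h.1.card)


/-!
Weak Kantorovich duality with the potentials `φ u = L(h) - c_A u` and `ψ v = -c_B v`, where `c_A`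
vanishes on `A_h` and equals `max w` off it (likewise `c_B` for `B_h`). A vertex outside `A_h`
charged by `μ^α_{A_h}` is the input of a hyperedge with an output in `A_h`; its reversal shows the
vertex lies within `max w` of `A_h`. So for `u, v` in the supports, the triangle inequality through
some `x ∈ A_h` and `y ∈ B_h` gives `L(h) ≤ d(x, y) ≤ c_A u + d(u, v) + c_B v`. As each measure puts
mass at least `α` on its own side, `W ≥ L(h) - 2 (1 - α) max w`.
-/

namespace DHyp

variable (G : DHyp V)

def reverse : DHyp V where
  E := G.E.map (Equiv.prodComm _ _).toEmbedding
  w e := G.w e.swap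
  pos _ he := by
    obtain ⟨e, he', rfl⟩ := Finset.mem_map.1 he
    exact G.pos e he'
  nonempA _ he := by
    obtain ⟨e, he', rfl⟩ := Finset.mem_map.1 he
    exact G.nonempB e he'
  nonempB _ he := by
    obtain ⟨e, he', rfl⟩ := Finset.mem_map.1 he
    exact G.nonempA e he'

@[simp]
lemma mem_reverse_E {e : Finset V × Finset V} : e ∈ G.reverse.E ↔ e.swap ∈ G.E := by
  simp [reverse]

end DHyp

section Hypergraph

variable (G : DHyp V)

lemma w_le_maxWd {e : Finset V × Finset V} (he : e ∈ G.E) : G.w e ≤ maxWd G :=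
  le_csSup ((G.E.finite_toSet.image G.w).bddAbove.mono
    (by rintro _ ⟨e, he, rfl⟩; exact ⟨e, he, rfl⟩)) ⟨e, he, rfl⟩

lemma mem_GammaIn {x z : V} : z ∈ GammaIn G x ↔ ∃ e ∈ G.E, x ∈ e.2 ∧ z ∈ e.1 := by
  simp [GammaIn]

lemma mem_GammaOut {y z : V} : z ∈ GammaOut G y ↔ ∃ e ∈ G.E, y ∈ e.1 ∧ z ∈ e.2 := by
  simp [GammaOut]

lemma GammaIn_reverse (y : V) : GammaIn G.reverse y = GammaOut G y := by
  ext z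
  rw [mem_GammaIn, mem_GammaOut]
  exact ⟨fun ⟨e, he, hy, hz⟩ => ⟨e.swap, (G.mem_reverse_E).1 he, hy, hz⟩,
    fun ⟨e, he, hy, hz⟩ => ⟨e.swap, by simpa using he, hy, hz⟩⟩

lemma muIn_reverse (α : ℝ) (m : ℕ) (y z : V) : muIn G.reverse α m y z = muOut G α m y z := by
  rw [muIn, muOut, GammaIn_reverse]
  simp only [DHyp.reverse, Finset.filter_map, Finset.sum_map]
  rfl

lemma muA_reverse (α : ℝ) (h : Finset V × Finset V) : muA G.reverse α h.swap = muB G α h := by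
  ext z
  simp only [muA, muB, Prod.fst_swap, muIn_reverse]

variable {G}

lemma Oriented.loopless (hor : Oriented G) : Loopless G := fun e he => (hor e he).1

lemma Loopless.reverse (hl : Loopless G) : Loopless G.reverse := fun e he => by
  rw [Finset.inter_comm]
  exact hl e.swap ((G.mem_reverse_E).1 he)

lemma Loopless.notMem_snd (hl : Loopless G) {e : Finset V × Finset V} (he : e ∈ G.E) {x : V}
    (hx : x ∈ e.1) : x ∉ e.2 :=
  fun hx' => Finset.notMem_empty x (hl e he ▸ Finset.mem_inter.2 ⟨hx, hx'⟩)

end Hypergraph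

section Distance

variable (G : DHyp V)

def pathWeights (u v : V) : Set ℝ := {s | ∃ γ, IsDipath G γ u v ∧ s = (γ.map G.w).sum}

lemma ddist_of_ne {u v : V} (huv : u ≠ v) : ddist G u v = sInf (pathWeights G u v) :=
  if_neg huv

variable {G}

lemma pathWeight_nonneg {γ : List (Finset V × Finset V)} (hγ : ∀ e ∈ γ, e ∈ G.E) :
    0 ≤ (γ.map G.w).sum :=
  List.sum_nonneg fun _ hx => by
    obtain ⟨e, he, rfl⟩ := List.mem_map.1 hx
    exact (G.pos e (hγ e he)).le

lemma bddBelow_pathWeights (u v : V) : BddBelow (pathWeights G u v) :=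
  ⟨0, by rintro _ ⟨γ, hγ, rfl⟩; exact pathWeight_nonneg hγ.2.1⟩

lemma ddist_self (u : V) : ddist G u u = 0 := if_pos rfl

lemma ddist_nonneg (u v : V) : 0 ≤ ddist G u v := by
  by_cases huv : u = v
  · rw [huv, ddist_self]
  · rw [ddist_of_ne G huv]
    exact Real.sInf_nonneg fun _ ⟨γ, hγ, hs⟩ => hs ▸ pathWeight_nonneg hγ.2.1

lemma ddist_le_pathWeight {γ : List (Finset V × Finset V)} {u v : V} (hγ : IsDipath G γ u v) :
    ddist G u v ≤ (γ.map G.w).sum := by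
  by_cases huv : u = v
  · rw [huv, ddist_self]
    exact pathWeight_nonneg hγ.2.1
  · rw [ddist_of_ne G huv]
    exact csInf_le (bddBelow_pathWeights u v) ⟨γ, hγ, rfl⟩

lemma IsDipath.append {γ₁ γ₂ : List (Finset V × Finset V)} {u v w : V}
    (h₁ : IsDipath G γ₁ u v) (h₂ : IsDipath G γ₂ v w) :
    IsDipath G (γ₁ ++ γ₂) u w := by
  obtain ⟨hne₁, hmem₁, hhead₁, hlast₁, hchain₁⟩ := h₁
  obtain ⟨hne₂, hmem₂, hhead₂, hlast₂, hchain₂⟩ := h₂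
  refine ⟨by simp [hne₁], fun e he => (List.mem_append.1 he).elim (hmem₁ e) (hmem₂ e),
    fun e he => hhead₁ e ?_, fun e he => hlast₂ e ?_, ?_⟩
  · rwa [List.head?_append_of_ne_nil _ hne₁] at he
  · rwa [List.getLast?_append_of_ne_nil _ hne₂] at he
  · exact List.isChain_append.2 ⟨hchain₁, hchain₂,
      fun a ha b hb => ⟨v, Finset.mem_inter.2 ⟨hlast₁ a ha, hhead₂ b hb⟩⟩⟩

lemma isDipath_singleton {e : Finset V × Finset V} (he : e ∈ G.E) {u v : V} (hu : u ∈ e.1)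
    (hv : v ∈ e.2) : IsDipath G [e] u v :=
  ⟨List.cons_ne_nil _ _, by simpa using he, by simpa using hu, by simpa using hv,
    List.isChain_singleton e⟩

lemma ddist_le_w {e : Finset V × Finset V} (he : e ∈ G.E) {u v : V} (hu : u ∈ e.1)
    (hv : v ∈ e.2) : ddist G u v ≤ G.w e := by
  simpa using ddist_le_pathWeight (isDipath_singleton he hu hv)

lemma nonempty_pathWeights (hsc : StronglyConnected G) {u v : V} (huv : u ≠ v) :
    (pathWeights G u v).Nonempty :=
  let ⟨γ, hγ⟩ := hsc u v huv
  ⟨_, γ, hγ, rfl⟩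

lemma ddist_triangle (hsc : StronglyConnected G) (u v w : V) :
    ddist G u w ≤ ddist G u v + ddist G v w := by
  by_cases huv : u = v
  · rw [huv, ddist_self, zero_add]
  by_cases hvw : v = w
  · rw [hvw, ddist_self, add_zero]
  have hpath : ∀ s ∈ pathWeights G u v, ∀ t ∈ pathWeights G v w, ddist G u w ≤ s + t := by
    rintro _ ⟨γ₁, hγ₁, rfl⟩ _ ⟨γ₂, hγ₂, rfl⟩
    simpa using ddist_le_pathWeight (hγ₁.append hγ₂)
  rw [ddist_of_ne G huv, ddist_of_ne G hvw]
  have hs : ∀ s ∈ pathWeights G u v, ddist G u w - s ≤ sInf (pathWeights G v w) :=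
    fun s hs => le_csInf (nonempty_pathWeights hsc hvw) fun t ht => by linarith [hpath s hs t ht]
  have := le_csInf (nonempty_pathWeights hsc huv) fun s h =>
    show ddist G u w - sInf (pathWeights G v w) ≤ s by linarith [hs s h]
  linarith

lemma ddist_pos (hsc : StronglyConnected G) {u v : V} (huv : u ≠ v) : 0 < ddist G u v := by
  obtain ⟨γ, hγ⟩ := hsc u v huv
  have hE : G.E.Nonempty := by
    obtain ⟨e, he⟩ := List.exists_mem_of_ne_nil γ hγ.1
    exact ⟨e, hγ.2.1 e he⟩
  -- every path weighs at least as much as the lightest hyperedge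
  refine lt_of_lt_of_le ((Finset.lt_inf'_iff hE).2 fun e he => G.pos e he) ?_
  rw [ddist_of_ne G huv]
  refine le_csInf (nonempty_pathWeights hsc huv) ?_
  rintro _ ⟨γ, ⟨hne, hmem, -⟩, rfl⟩
  obtain ⟨e, t, rfl⟩ := List.exists_cons_of_ne_nil hne
  have := pathWeight_nonneg fun e' he' => hmem e' (List.mem_cons_of_mem e he')
  simp only [List.map_cons, List.sum_cons]
  linarith [Finset.inf'_le G.w (hmem e List.mem_cons_self)]

lemma Oriented.ddist_le_maxWd_of_mem_GammaIn (hor : Oriented G) {x u : V}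
    (hu : u ∈ GammaIn G x) : ddist G x u ≤ maxWd G := by
  obtain ⟨e, he, hx, hu⟩ := (mem_GammaIn G).1 hu
  calc ddist G x u ≤ G.w (e.2, e.1) := ddist_le_w (hor e he).2.1 hx hu
    _ = G.w e := (hor e he).2.2
    _ ≤ maxWd G := w_le_maxWd G he

lemma Oriented.ddist_le_maxWd_of_mem_GammaOut (hor : Oriented G) {y v : V}
    (hv : v ∈ GammaOut G y) : ddist G v y ≤ maxWd G := by
  obtain ⟨e, he, hy, hv⟩ := (mem_GammaOut G).1 hv
  calc ddist G v y ≤ G.w (e.2, e.1) := ddist_le_w (hor e he).2.1 hv hy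
    _ = G.w e := (hor e he).2.2
    _ ≤ maxWd G := w_le_maxWd G he

lemma Ldi_le_ddist {h : Finset V × Finset V} {x y : V} (hx : x ∈ h.1) (hy : y ∈ h.2) :
    Ldi G h ≤ ddist G x y :=
  csInf_le ⟨0, by rintro _ ⟨x, -, y, -, rfl⟩; exact ddist_nonneg x y⟩
    ⟨x, hx, y, hy, rfl⟩

lemma Ldi_pos (hl : Loopless G) (hsc : StronglyConnected G) {h : Finset V × Finset V}
    (hh : h ∈ G.E) : 0 < Ldi G h := by
  set S := {s | ∃ x ∈ h.1, ∃ y ∈ h.2, s = ddist G x y}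
  have hfin : S.Finite := ((h.1 ×ˢ h.2).finite_toSet.image fun p => ddist G p.1 p.2).subset
    (by rintro _ ⟨x, hx, y, hy, rfl⟩; exact ⟨(x, y), Finset.mem_product.2 ⟨hx, hy⟩, rfl⟩)
  obtain ⟨x, hx⟩ := G.nonempA h hh
  obtain ⟨y, hy⟩ := G.nonempB h hh
  obtain ⟨x, hx, y, hy, hL⟩ := Set.Nonempty.csInf_mem (s := S) ⟨_, x, hx, y, hy, rfl⟩ hfin
  rw [Ldi, hL]
  exact ddist_pos hsc fun hxy => hl.notMem_snd hh hx (hxy ▸ hy)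

end Distance

section Measures

variable {G : DHyp V}

lemma muIn_nonneg {α : ℝ} (hα : α ∈ Set.Icc (0 : ℝ) 1) (n : ℕ) (x z : V) :
    0 ≤ muIn G α n x z := by
  have hW : 0 ≤ ∑ e ∈ G.E.filter (fun e => x ∈ e.2), G.w e :=
    Finset.sum_nonneg fun e he => (G.pos e (Finset.mem_filter.1 he).1).le
  unfold muIn
  split_ifs
  · exact div_nonneg hα.1 n.cast_nonneg
  · refine mul_nonneg (sub_nonneg.2 hα.2) (Finset.sum_nonneg fun e he => ?_)
    have := G.pos e (Finset.mem_filter.1 he).1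
    positivity
  · rfl

lemma muIn_self (α : ℝ) (n : ℕ) (x : V) : muIn G α n x x = α / n := by
  simp [muIn]

lemma mem_GammaIn_of_muIn_ne_zero {α : ℝ} {n : ℕ} {x z : V} (hz : muIn G α n x z ≠ 0)
    (hzx : z ≠ x) : z ∈ GammaIn G x := by
  by_contra hΓ
  simp [muIn, hzx, hΓ] at hz

lemma sum_muIn (hl : Loopless G) {x : V} (hx : ∃ e ∈ G.E, x ∈ e.2) (α : ℝ) (n : ℕ) :
    ∑ z, muIn G α n x z = 1 / n := by
  set W := ∑ e ∈ G.E.filter (fun e => x ∈ e.2), G.w e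
  have hW : 0 < W := by
    obtain ⟨e, he, hxe⟩ := hx
    exact Finset.sum_pos' (fun e' he' => (G.pos e' (Finset.mem_filter.1 he').1).le)
      ⟨e, Finset.mem_filter.2 ⟨he, hxe⟩, G.pos e he⟩
  set c : Finset V × Finset V → ℝ := fun e => 1 / ((n : ℝ) * e.1.card) * (G.w e / W)
  -- the branch `z ∉ GammaIn G x` of `muIn` is an empty sum, and so is `z = x` by looplessness
  have hpt : ∀ z, muIn G α n x z = (if z = x then α / n else 0)
      + (1 - α) * ∑ e ∈ G.E.filter (fun e => x ∈ e.2 ∧ z ∈ e.1), c e := by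
    intro z
    have hempty : (z = x ∨ z ∉ GammaIn G x) →
        ∑ e ∈ G.E.filter (fun e => x ∈ e.2 ∧ z ∈ e.1), c e = 0 := by
      refine fun hz => Finset.sum_eq_zero fun e he => ?_
      obtain ⟨he', hxe, hze⟩ := Finset.mem_filter.1 he
      rcases hz with rfl | hΓ
      · exact (hl.notMem_snd he' hze hxe).elim
      · exact absurd ((mem_GammaIn G).2 ⟨e, he', hxe, hze⟩) hΓ
    unfold muIn
    split_ifs with hzx hΓ
    · rw [hempty (.inl hzx), mul_zero, add_zero]
    · rw [zero_add]
    · rw [hempty (.inr hΓ), mul_zero, add_zero]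
  have hcard : ∀ e ∈ G.E.filter (fun e => x ∈ e.2),
      ∑ _z ∈ e.1, c e = 1 / n * (G.w e / W) := by
    intro e he
    have : (e.1.card : ℝ) ≠ 0 := by
      exact_mod_cast (G.nonempA e (Finset.mem_filter.1 he).1).card_pos.ne'
    rw [Finset.sum_const, nsmul_eq_mul]
    simp only [c]
    field_simp
  have hswap : ∑ z, ∑ e ∈ G.E.filter (fun e => x ∈ e.2 ∧ z ∈ e.1), c e
      = ∑ e ∈ G.E.filter (fun e => x ∈ e.2), ∑ _z ∈ e.1, c e :=
    Finset.sum_comm' fun z e => by simp only [Finset.mem_filter, Finset.mem_univ, true_and]; tauto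
  rw [Finset.sum_congr rfl fun z _ => hpt z, Finset.sum_add_distrib, Finset.sum_ite_eq',
    ← Finset.mul_sum, hswap, Finset.sum_congr rfl hcard, ← Finset.mul_sum, ← Finset.sum_div,
    div_self hW.ne']
  simp only [Finset.mem_univ, if_true]
  ring

lemma muA_nonneg {α : ℝ} (hα : α ∈ Set.Icc (0 : ℝ) 1) (h : Finset V × Finset V) (z : V) :
    0 ≤ muA G α h z :=
  Finset.sum_nonneg fun x _ => muIn_nonneg hα _ x z

lemma sum_muA (hl : Loopless G) {h : Finset V × Finset V} (hA : h.1.Nonempty)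
    (hin : ∀ x ∈ h.1, ∃ e ∈ G.E, x ∈ e.2) (α : ℝ) : ∑ z, muA G α h z = 1 := by
  have : (h.1.card : ℝ) ≠ 0 := by exact_mod_cast hA.card_pos.ne'
  unfold muA
  rw [Finset.sum_comm, Finset.sum_congr rfl fun x hx => sum_muIn hl (hin x hx) α _,
    Finset.sum_const, nsmul_eq_mul]
  field_simp

lemma le_sum_muA {α : ℝ} (hα : α ∈ Set.Icc (0 : ℝ) 1) {h : Finset V × Finset V}
    (hA : h.1.Nonempty) : α ≤ ∑ z ∈ h.1, muA G α h z := by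
  have : (h.1.card : ℝ) ≠ 0 := by exact_mod_cast hA.card_pos.ne'
  calc α = ∑ z ∈ h.1, muIn G α h.1.card z z := by
        rw [Finset.sum_congr rfl fun z _ => muIn_self α _ z, Finset.sum_const, nsmul_eq_mul]
        field_simp
    _ ≤ ∑ z ∈ h.1, muA G α h z := Finset.sum_le_sum fun z hz =>
        Finset.single_le_sum (fun x _ => muIn_nonneg hα _ x z) hz

lemma exists_mem_GammaIn_of_muA_ne_zero {α : ℝ} {h : Finset V × Finset V} {u : V}
    (hu : muA G α h u ≠ 0) (huA : u ∉ h.1) : ∃ x ∈ h.1, u ∈ GammaIn G x := by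
  obtain ⟨x, hx, hux⟩ := Finset.exists_ne_zero_of_sum_ne_zero hu
  exact ⟨x, hx, mem_GammaIn_of_muIn_ne_zero hux fun h => huA (h ▸ hx)⟩

lemma muB_nonneg {α : ℝ} (hα : α ∈ Set.Icc (0 : ℝ) 1) (h : Finset V × Finset V) (z : V) :
    0 ≤ muB G α h z :=
  muA_reverse G α h ▸ muA_nonneg hα h.swap z

lemma sum_muB (hl : Loopless G) {h : Finset V × Finset V} (hB : h.2.Nonempty)
    (hout : ∀ y ∈ h.2, ∃ e ∈ G.E, y ∈ e.1) (α : ℝ) : ∑ z, muB G α h z = 1 := by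
  rw [← muA_reverse]
  refine sum_muA hl.reverse hB (fun y hy => ?_) α
  obtain ⟨e, he, hye⟩ := hout y hy
  exact ⟨e.swap, by simpa using he, hye⟩

lemma le_sum_muB {α : ℝ} (hα : α ∈ Set.Icc (0 : ℝ) 1) {h : Finset V × Finset V}
    (hB : h.2.Nonempty) : α ≤ ∑ z ∈ h.2, muB G α h z := by
  rw [← muA_reverse]
  exact le_sum_muA hα hB

lemma exists_mem_GammaOut_of_muB_ne_zero {α : ℝ} {h : Finset V × Finset V} {v : V}
    (hv : muB G α h v ≠ 0) (hvB : v ∉ h.2) : ∃ y ∈ h.2, v ∈ GammaOut G y := by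
  rw [← muA_reverse] at hv
  simpa only [GammaIn_reverse, Prod.fst_swap] using exists_mem_GammaIn_of_muA_ne_zero hv hvB

end Measures

section Wasserstein

omit [DecidableEq V]

variable {μ ν : V → ℝ} {π : V → V → ℝ}

lemma IsCoupling.le_left (hπ : IsCoupling μ ν π) (u v : V) : π u v ≤ μ u :=
  hπ.2.1 u ▸ Finset.single_le_sum (fun v _ => hπ.1 u v) (Finset.mem_univ v)

lemma IsCoupling.le_right (hπ : IsCoupling μ ν π) (u v : V) : π u v ≤ ν v :=
  hπ.2.2 v ▸ Finset.single_le_sum (fun u _ => hπ.1 u v) (Finset.mem_univ u)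

lemma isCoupling_mul (hμ : ∀ u, 0 ≤ μ u) (hν : ∀ v, 0 ≤ ν v) (hμ₁ : ∑ u, μ u = 1)
    (hν₁ : ∑ v, ν v = 1) : IsCoupling μ ν fun u v => μ u * ν v :=
  ⟨fun u v => mul_nonneg (hμ u) (hν v), fun u => by rw [← Finset.mul_sum, hν₁, mul_one],
    fun v => by rw [← Finset.sum_mul, hμ₁, one_mul]⟩

/-- Weak Kantorovich duality. -/
lemma sum_mul_add_sum_mul_le_Wd {d : V → V → ℝ} {φ ψ : V → ℝ}
    (hc : ∃ π, IsCoupling μ ν π)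
    (hφψ : ∀ u v, μ u ≠ 0 → ν v ≠ 0 → φ u + ψ v ≤ d u v) :
    ∑ u, μ u * φ u + ∑ v, ν v * ψ v ≤ Wd d μ ν := by
  obtain ⟨π₀, hπ₀⟩ := hc
  refine le_csInf ⟨_, π₀, hπ₀, rfl⟩ ?_
  rintro _ ⟨π, hπ, rfl⟩
  have hpt : ∀ u v, π u v * (φ u + ψ v) ≤ π u v * d u v := by
    intro u v
    rcases (hπ.1 u v).eq_or_lt with h0 | hpos
    · rw [← h0, zero_mul, zero_mul]
    · exact mul_le_mul_of_nonneg_left (hφψ u v (hpos.trans_le (hπ.le_left u v)).ne'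
        (hpos.trans_le (hπ.le_right u v)).ne') hpos.le
  calc ∑ u, μ u * φ u + ∑ v, ν v * ψ v = ∑ u, ∑ v, π u v * (φ u + ψ v) := by
        simp only [← hπ.2.1, ← hπ.2.2, Finset.sum_mul, mul_add, Finset.sum_add_distrib]
        rw [Finset.sum_comm (f := fun u v => π u v * ψ v)]
    _ ≤ ∑ u, ∑ v, π u v * d u v :=
        Finset.sum_le_sum fun u _ => Finset.sum_le_sum fun v _ => hpt u v

end Wasserstein

lemma sum_mul_ite_le {μ : V → ℝ} {s : Finset V} {a M : ℝ} (hμ : ∑ u, μ u = 1)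
    (hs : a ≤ ∑ u ∈ s, μ u) (hM : 0 ≤ M) : ∑ u, μ u * (if u ∈ s then 0 else M) ≤ (1 - a) * M := by
  have hs₀ : ∑ u ∈ s, μ u * (if u ∈ s then 0 else M) = 0 :=
    Finset.sum_eq_zero fun u hu => by rw [if_pos hu, mul_zero]
  have hcompl : ∑ u ∈ sᶜ, μ u * (if u ∈ s then 0 else M) = (∑ u ∈ sᶜ, μ u) * M := by
    rw [Finset.sum_mul]
    exact Finset.sum_congr rfl fun u hu => by rw [if_neg (Finset.mem_compl.1 hu)]
  rw [← Finset.sum_compl_add_sum s, hs₀, hcompl, add_zero]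
  have := Finset.sum_compl_add_sum s μ
  exact mul_le_mul_of_nonneg_right (by linarith) hM

section Curvature

variable {G : DHyp V}

lemma sub_le_Wd_muA_muB (hor : Oriented G) (hsc : StronglyConnected G) {α : ℝ}
    (hα : α ∈ Set.Icc (0 : ℝ) 1) {h : Finset V × Finset V} (hh : h ∈ G.E) :
    Ldi G h - (1 - α) * (2 * maxWd G) ≤ Wd (ddist G) (muA G α h) (muB G α h) := by
  set M := maxWd G
  set cA : V → ℝ := fun u => if u ∈ h.1 then 0 else M
  set cB : V → ℝ := fun v => if v ∈ h.2 then 0 else M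
  have hM : 0 ≤ M := (G.pos h hh).le.trans (w_le_maxWd G hh)
  have hrev : h.swap ∈ G.E := (hor h hh).2.1
  have hA₁ : ∑ u, muA G α h u = 1 :=
    sum_muA hor.loopless (G.nonempA h hh) (fun x hx => ⟨h.swap, hrev, hx⟩) α
  have hB₁ : ∑ v, muB G α h v = 1 :=
    sum_muB hor.loopless (G.nonempB h hh) (fun y hy => ⟨h.swap, hrev, hy⟩) α
  have hnearA : ∀ u, muA G α h u ≠ 0 → ∃ x ∈ h.1, ddist G x u ≤ cA u := by
    intro u hu
    by_cases huA : u ∈ h.1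
    · exact ⟨u, huA, by simp [cA, huA, ddist_self]⟩
    · obtain ⟨x, hx, hux⟩ := exists_mem_GammaIn_of_muA_ne_zero hu huA
      exact ⟨x, hx, by simpa [cA, huA] using hor.ddist_le_maxWd_of_mem_GammaIn hux⟩
  have hnearB : ∀ v, muB G α h v ≠ 0 → ∃ y ∈ h.2, ddist G v y ≤ cB v := by
    intro v hv
    by_cases hvB : v ∈ h.2
    · exact ⟨v, hvB, by simp [cB, hvB, ddist_self]⟩
    · obtain ⟨y, hy, hvy⟩ := exists_mem_GammaOut_of_muB_ne_zero hv hvB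
      exact ⟨y, hy, by simpa [cB, hvB] using hor.ddist_le_maxWd_of_mem_GammaOut hvy⟩
  have hdual := sum_mul_add_sum_mul_le_Wd (d := ddist G)
    (φ := fun u => Ldi G h - cA u) (ψ := fun v => -cB v)
    ⟨_, isCoupling_mul (muA_nonneg hα h) (muB_nonneg hα h) hA₁ hB₁⟩ fun u v hu hv => by
      obtain ⟨x, hx, hxu⟩ := hnearA u hu
      obtain ⟨y, hy, hvy⟩ := hnearB v hv
      linarith [Ldi_le_ddist (G := G) hx hy, ddist_triangle hsc x u y, ddist_triangle hsc u v y]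
  have hmassA := sum_mul_ite_le hA₁ (le_sum_muA hα (G.nonempA h hh)) hM
  have hmassB := sum_mul_ite_le hB₁ (le_sum_muB hα (G.nonempB h hh)) hM
  simp only [mul_sub, mul_neg, Finset.sum_sub_distrib, Finset.sum_neg_distrib, ← Finset.sum_mul,
    hA₁, one_mul] at hdual
  linarith

end Curvature

/-- curvature upper bound on oriented hypergraphs. -/
theorem stmt12 (G : DHyp V) (hor : Oriented G) (hsc : StronglyConnected G)
    (α : ℝ) (hα : α ∈ Set.Icc (0:ℝ) 1) (h : Finset V × Finset V) (hh : h ∈ G.E) :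
    kappaDE G α h ≤ (1 - α) * (2 * maxWd G) / Ldi G h := by
  have hL : 0 < Ldi G h := Ldi_pos hor.loopless hsc hh
  have hW := sub_le_Wd_muA_muB hor hsc hα hh
  have hdiv := div_le_div_of_nonneg_right hW hL.le
  rw [sub_div, div_self hL.ne'] at hdiv
  unfold kappaDE
  linarith
end
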